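/- Let G, H be finite groups with group matrix spaces GM^G, GM^H, GM^{G×H}. For M ∈ ℝ^{G×G} and N ∈ ℝ^{H×H}, dist(M ⊗ N, GM^{G×H}) ≤ max{‖M‖_F, ‖N‖_F} · (dist(M, GM^G) + dist(N, GM^H)). -/

import Mathlib

/-!
Writing `M₀, N₀` for the orthogonal projections of `M, N` onto the group matrices, `M₀ ⊗ N₀` is a
`(G × H)`-group matrix and
`M ⊗ N - M₀ ⊗ N₀ = (M - M₀) ⊗ N + M₀ ⊗ (N - N₀)`.
The Frobenius norm is multiplicative on Kronecker products and `‖M₀‖ ≤ ‖M‖`, so the two terms are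
bounded by `‖N‖ dist(M)` and `‖M‖ dist(N)`.
-/

open Matrix Kronecker

/-- The set of group matrices of a group `K`. -/
def groupMatrices (K : Type*) [Group K] : Set (Matrix K K ℝ) :=
  {M | ∃ c : K → ℝ, ∀ h h' : K, M h h' = c (h * h'⁻¹)}

/-- The Frobenius norm of a matrix. -/
noncomputable def frobNorm {α : Type*} [Fintype α] (M : Matrix α α ℝ) : ℝ :=
  Real.sqrt (∑ i, ∑ j, (M i j) ^ 2)

/-- Frobenius distance from a matrix to the group matrices of `K`. -/
noncomputable def distGM {K : Type*} [Group K] [Fintype K] (M : Matrix K K ℝ) : ℝ :=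
  sInf {d : ℝ | ∃ M₀ ∈ groupMatrices K, d = frobNorm (M - M₀)}

section FrobeniusNorm

variable {α β : Type*} [Fintype α] [Fintype β]

variable (α) in
noncomputable def euclideanEntriesEquiv :
    Matrix α α ℝ ≃ₗ[ℝ] EuclideanSpace ℝ (α × α) :=
  (LinearEquiv.curry ℝ ℝ α α).symm.trans (WithLp.linearEquiv 2 ℝ (α × α → ℝ)).symm

theorem frobNorm_eq_norm_euclideanEntriesEquiv (M : Matrix α α ℝ) :
    frobNorm M = ‖euclideanEntriesEquiv α M‖ := by
  rw [frobNorm, EuclideanSpace.norm_eq, Fintype.sum_prod_type]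
  simp only [Real.norm_eq_abs, sq_abs]
  rfl

theorem frobNorm_nonneg (M : Matrix α α ℝ) : 0 ≤ frobNorm M := Real.sqrt_nonneg _

theorem frobNorm_add_le (A B : Matrix α α ℝ) : frobNorm (A + B) ≤ frobNorm A + frobNorm B := by
  simpa only [frobNorm_eq_norm_euclideanEntriesEquiv, map_add] using norm_add_le _ _

theorem frobNorm_kronecker (A : Matrix α α ℝ) (B : Matrix β β ℝ) :
    frobNorm (A ⊗ₖ B) = frobNorm A * frobNorm B := by
  rw [frobNorm, frobNorm, frobNorm, ← Real.sqrt_mul (by positivity)]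
  simp_rw [Fintype.sum_prod_type, kroneckerMap_apply, mul_pow, Finset.sum_mul_sum]

/-- The witness is the orthogonal projection of `M` onto `S`. -/
theorem Submodule.exists_frobNorm_nearest (S : Submodule ℝ (Matrix α α ℝ)) (M : Matrix α α ℝ) :
    ∃ M₀ ∈ S, (∀ M₁ ∈ S, frobNorm (M - M₀) ≤ frobNorm (M - M₁)) ∧ frobNorm M₀ ≤ frobNorm M := by
  set e := euclideanEntriesEquiv α
  set U := S.map e.toLinearMap
  obtain ⟨M₀, hM₀, hproj⟩ : U.starProjection (e M) ∈ U := U.starProjection_apply_mem _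
  refine ⟨M₀, hM₀, fun M₁ hM₁ => ?_, ?_⟩
  · simp only [frobNorm_eq_norm_euclideanEntriesEquiv, map_sub]
    rw [show e M₀ = U.starProjection (e M) from hproj, Submodule.starProjection_minimal]
    exact ciInf_le ⟨0, Set.forall_mem_range.2 fun _ => norm_nonneg _⟩
      (⟨e M₁, Submodule.mem_map_of_mem hM₁⟩ : U)
  · simp only [frobNorm_eq_norm_euclideanEntriesEquiv]
    exact hproj ▸ U.norm_starProjection_apply_le _

end FrobeniusNorm

section GroupMatrices

def groupMatrixSubmodule (K : Type*) [Group K] : Submodule ℝ (Matrix K K ℝ) where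
  carrier := groupMatrices K
  zero_mem' := ⟨0, fun _ _ => rfl⟩
  add_mem' := by
    rintro A B ⟨a, ha⟩ ⟨b, hb⟩
    exact ⟨a + b, fun h h' => by simp [ha, hb]⟩
  smul_mem' := by
    rintro r A ⟨a, ha⟩
    exact ⟨r • a, fun h h' => by simp [ha]⟩

theorem kronecker_mem_groupMatrices {G H : Type*} [Group G] [Group H]
    {A : Matrix G G ℝ} {B : Matrix H H ℝ} (hA : A ∈ groupMatrices G) (hB : B ∈ groupMatrices H) :
    A ⊗ₖ B ∈ groupMatrices (G × H) := by
  obtain ⟨a, ha⟩ := hA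
  obtain ⟨b, hb⟩ := hB
  exact ⟨fun g => a g.1 * b g.2, fun h h' => by simp [ha, hb]⟩

variable {K : Type*} [Group K] [Fintype K]

theorem distGM_le_frobNorm_sub {M M₀ : Matrix K K ℝ} (hM₀ : M₀ ∈ groupMatrices K) :
    distGM M ≤ frobNorm (M - M₀) :=
  csInf_le ⟨0, by rintro _ ⟨_, _, rfl⟩; exact frobNorm_nonneg _⟩ ⟨M₀, hM₀, rfl⟩

theorem exists_groupMatrix_distGM_eq (M : Matrix K K ℝ) :
    ∃ M₀ ∈ groupMatrices K, distGM M = frobNorm (M - M₀) ∧ frobNorm M₀ ≤ frobNorm M := by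
  obtain ⟨M₀, hM₀, hnearest, hle⟩ := (groupMatrixSubmodule K).exists_frobNorm_nearest M
  refine ⟨M₀, hM₀, le_antisymm (distGM_le_frobNorm_sub hM₀) ?_, hle⟩
  refine le_csInf ⟨_, M₀, hM₀, rfl⟩ ?_
  rintro _ ⟨M₁, hM₁, rfl⟩
  exact hnearest M₁ hM₁

end GroupMatrices

/-- `dist(M ⊗ N, GM^{G×H}) ≤ max{‖M‖, ‖N‖} (dist(M, GM^G) + dist(N, GM^H))`. -/
theorem distGM_kronecker_le {G H : Type*} [Group G] [Group H]
    [Fintype G] [Fintype H] (M : Matrix G G ℝ) (N : Matrix H H ℝ) :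
    distGM (M ⊗ₖ N : Matrix (G × H) (G × H) ℝ) ≤
      max (frobNorm M) (frobNorm N) * (distGM M + distGM N) := by
  obtain ⟨M₀, hM₀, hdistM, hM₀_le⟩ := exists_groupMatrix_distGM_eq M
  obtain ⟨N₀, hN₀, hdistN, -⟩ := exists_groupMatrix_distGM_eq N
  have hsplit : M ⊗ₖ N - M₀ ⊗ₖ N₀ = (M - M₀) ⊗ₖ N + M₀ ⊗ₖ (N - N₀) := by
    ext ⟨i, k⟩ ⟨j, l⟩
    simp only [Matrix.sub_apply, Matrix.add_apply, kroneckerMap_apply]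
    ring
  have hM_le := le_max_left (frobNorm M) (frobNorm N)
  have hN_le := le_max_right (frobNorm M) (frobNorm N)
  calc distGM (M ⊗ₖ N)
      ≤ frobNorm (M ⊗ₖ N - M₀ ⊗ₖ N₀) :=
        distGM_le_frobNorm_sub (kronecker_mem_groupMatrices hM₀ hN₀)
    _ ≤ frobNorm (M - M₀) * frobNorm N + frobNorm M₀ * frobNorm (N - N₀) := by
        rw [hsplit, ← frobNorm_kronecker, ← frobNorm_kronecker]
        exact frobNorm_add_le _ _
    _ ≤ distGM M * max (frobNorm M) (frobNorm N) + max (frobNorm M) (frobNorm N) * distGM N := by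
        rw [hdistM, hdistN]
        have := frobNorm_nonneg (M - M₀)
        have := frobNorm_nonneg (N - N₀)
        gcongr
        exact hM₀_le.trans hM_le
    _ = max (frobNorm M) (frobNorm N) * (distGM M + distGM N) := by ring
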